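/- Let T_i be a rooted binary phylogenetic tree on leaf set Y_i with root y_i, evolving under the symmetric 4-state model N_4, and suppose y_i is attached below a node ρ by an edge on which one specific state change occurs with probability p_i ∈ [0,1/4]. Writing P_(A)(Y_i) = P(MP(f_{Y_i}, T_i) = A | ρ = α) for the probability, conditional on ρ being in state α, that the Fitch algorithm assigns the set A at y_i, and P_R(Y_i) = P(MP(f_{Y_i}, T_i) = R | y_i = α), one has the three identities P_(α)(Y_i) − P_(β)(Y_i) = (1 − 4p_i)·(P_α(Y_i) − P_β(Y_i)), P_(αβ)(Y_i) − P_(βγ)(Y_i) = (1 − 4p_i)·(P_{αβ}(Y_i) − P_{βγ}(Y_i)), and P_(αβγ)(Y_i) − P_(βγδ)(Y_i) = (1 − 4p_i)·(P_{αβγ}(Y_i) − P_{βγδ}(Y_i)). -/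
import Mathlib


/-- A rooted binary phylogenetic tree: a `leaf` is a single taxon, and the
root of `node p₁ p₂ L R` has the roots of `L` and `R` as its two children,
attached by edges carrying one-specific-change probabilities `p₁` and `p₂`. -/
inductive PhyloTree : Type
  | leaf : PhyloTree
  | node (p₁ p₂ : ℝ) (L R : PhyloTree) : PhyloTree

namespace PhyloTree

/-- The number of leaves (taxa) of the tree. -/
def nLeaves : PhyloTree → ℕ
  | leaf => 1
  | node _ _ L R => nLeaves L + nLeaves R

/-- All edge substitution probabilities of the tree lie in `[0, 1/4]`. -/
def valid : PhyloTree → Prop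
  | leaf => True
  | node p₁ p₂ L R => 0 ≤ p₁ ∧ p₁ ≤ 1/4 ∧ 0 ≤ p₂ ∧ p₂ ≤ 1/4 ∧ valid L ∧ valid R

end PhyloTree

/-- Transition probabilities of the symmetric 4-state model `N₄`: conditional
on the upper endpoint of an edge with substitution probability `q` being in
state `a`, the lower endpoint is in each specific state `b ≠ a` with
probability `q`, and in state `a` with probability `1 - 3q`. -/
noncomputable def trans4 (q : ℝ) (a b : Fin 4) : ℝ := if a = b then 1 - 3*q else q

/-- `charProb4 t a f` is the probability, conditional on the root of `t`
being in state `a`, that the leaves of `t` (read from left to right) are in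
the states recorded by the list `f`.  States evolve independently along the
edges according to `trans4`. -/
noncomputable def charProb4 : PhyloTree → Fin 4 → List (Fin 4) → ℝ
  | .leaf, a, f => if f = [a] then 1 else 0
  | .node p₁ p₂ L R, a, f =>
      ∑ b : Fin 4, ∑ c : Fin 4, trans4 p₁ a b * trans4 p₂ a c *
        charProb4 L b (f.take L.nLeaves) * charProb4 R c (f.drop L.nLeaves)

/-- Fitch's parsimony operation: `A ∩ B` if it is nonempty, `A ∪ B` otherwise. -/
def fitchOp {k : ℕ} (A B : Finset (Fin k)) : Finset (Fin k) :=
  if (A ∩ B).Nonempty then A ∩ B else A ∪ B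

/-- The set `MP(f,T)` assigned to the root of `t` by the Fitch algorithm when
the leaves carry the character (list of leaf states) `f`. -/
def fitchSet4 : PhyloTree → List (Fin 4) → Finset (Fin 4)
  | .leaf, [b] => {b}
  | .leaf, _ => ∅
  | .node _ _ L R, f =>
      fitchOp (fitchSet4 L (f.take L.nLeaves)) (fitchSet4 R (f.drop L.nLeaves))

/-- `rootProb4 t a R = P(MP(f,T) = R ∣ root state = a)`. -/
noncomputable def rootProb4 (t : PhyloTree) (a : Fin 4) (R : Finset (Fin 4)) : ℝ :=
  ∑ f : Fin t.nLeaves → Fin 4,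
    if fitchSet4 t (List.ofFn f) = R then charProb4 t a (List.ofFn f) else 0

/-- The reconstruction accuracy
`RA(X) = ∑_{R ⊆ A, α ∈ R} (1/|R|) · P(MP(f,T) = R ∣ ρ = α)`, with `α := 0`. -/
noncomputable def RA4 (t : PhyloTree) : ℝ :=
  ∑ R : Finset (Fin 4),
    if (0 : Fin 4) ∈ R then (R.card : ℝ)⁻¹ * rootProb4 t 0 R else 0

/-- `ultra4 t p`: the tree `t` is ultrametric, and the probability of one
specific state change from the root to any leaf is `p` (under `N₄`, the
one-specific-change probabilities compose along a path as
`p₁ ∘ q₁ = p₁ + q₁ - 4·p₁·q₁`). -/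
def ultra4 : PhyloTree → ℝ → Prop
  | .leaf, p => p = 0
  | .node p₁ p₂ L R, p => ∃ q₁ q₂, ultra4 L q₁ ∧ ultra4 R q₂ ∧
      p = p₁ + q₁ - 4*p₁*q₁ ∧ p = p₂ + q₂ - 4*p₂*q₂

/-- `PParen4 t pᵢ A = P_{(A)}(Yᵢ)`: the probability, conditional on the node
`ρ` above the root `yᵢ` of `t` being in state `α = 0`, that the Fitch
algorithm assigns the set `A` at `yᵢ`, where the edge from `ρ` to `yᵢ`
carries one-specific-change probability `pᵢ`. -/
noncomputable def PParen4 (t : PhyloTree) (pi : ℝ) (A : Finset (Fin 4)) : ℝ :=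
  ∑ b : Fin 4, trans4 pi 0 b * rootProb4 t b A

-- auxiliary lemmas
lemma trans4_perm (σ : Equiv.Perm (Fin 4)) (q : ℝ) (a b : Fin 4) :
    trans4 q (σ a) (σ b) = trans4 q a b := by
  simp [trans4, σ.injective.eq_iff]

lemma charProb4_perm (σ : Equiv.Perm (Fin 4)) (t : PhyloTree) :
    ∀ (a : Fin 4) (f : List (Fin 4)),
    charProb4 t (σ a) (f.map σ) = charProb4 t a f := by
  induction t with
  | leaf =>
    intro a f
    have h : f.map σ = [σ a] ↔ f = [a] := by
      constructor
      · intro h; exact List.map_injective_iff.mpr σ.injective h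
      · intro h; simp [h]
    simp only [charProb4, h]
  | node p₁ p₂ L R ihL ihR =>
    intro a f
    simp only [charProb4]
    rw [← Equiv.sum_comp σ (fun b => ∑ c : Fin 4, trans4 p₁ (σ a) b * trans4 p₂ (σ a) c *
        charProb4 L b ((f.map σ).take L.nLeaves) * charProb4 R c ((f.map σ).drop L.nLeaves))]
    refine Finset.sum_congr rfl fun b _ => ?_
    rw [← Equiv.sum_comp σ (fun c => trans4 p₁ (σ a) (σ b) * trans4 p₂ (σ a) c *
        charProb4 L (σ b) ((f.map σ).take L.nLeaves) * charProb4 R c ((f.map σ).drop L.nLeaves))]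
    refine Finset.sum_congr rfl fun c _ => ?_
    rw [trans4_perm, trans4_perm, ← List.map_take, ← List.map_drop, ihL, ihR]

lemma fitchOp_image (σ : Equiv.Perm (Fin 4)) (A B : Finset (Fin 4)) :
    fitchOp (A.image σ) (B.image σ) = (fitchOp A B).image σ := by
  unfold fitchOp
  rw [← Finset.image_inter _ _ σ.injective]
  by_cases h : (A ∩ B).Nonempty
  · simp [h, Finset.image_nonempty]
  · simp [h, Finset.image_nonempty, Finset.image_union]

lemma fitchSet4_perm (σ : Equiv.Perm (Fin 4)) (t : PhyloTree) :
    ∀ f : List (Fin 4), fitchSet4 t (f.map σ) = (fitchSet4 t f).image σ := by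
  induction t with
  | leaf =>
    intro f
    match f with
    | [] => simp [fitchSet4]
    | [b] => simp [fitchSet4]
    | a :: b :: l => simp [fitchSet4]
  | node p₁ p₂ L R ihL ihR =>
    intro f
    simp only [fitchSet4]
    rw [← List.map_take, ← List.map_drop, ihL, ihR, fitchOp_image]

lemma rootProb4_perm (σ : Equiv.Perm (Fin 4)) (t : PhyloTree) (a : Fin 4)
    (R : Finset (Fin 4)) :
    rootProb4 t (σ a) (R.image σ) = rootProb4 t a R := by
  unfold rootProb4
  rw [← Equiv.sum_comp (Equiv.arrowCongr (Equiv.refl (Fin t.nLeaves)) σ)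
      (fun f => if fitchSet4 t (List.ofFn f) = R.image σ then charProb4 t (σ a) (List.ofFn f) else 0)]
  refine Finset.sum_congr rfl fun f _ => ?_
  have hof : List.ofFn ((Equiv.arrowCongr (Equiv.refl (Fin t.nLeaves)) σ) f)
      = (List.ofFn f).map σ := by
    simp [Equiv.arrowCongr_apply, List.map_ofFn]
    rfl
  rw [hof, fitchSet4_perm, charProb4_perm]
  congr 1
  simp [(Finset.image_injective σ.injective).eq_iff]

lemma rootProb4_eq (t : PhyloTree) (σ : Equiv.Perm (Fin 4)) {a b : Fin 4}
    {R S : Finset (Fin 4)} (ha : σ a = b) (hR : R.image σ = S) :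
    rootProb4 t b S = rootProb4 t a R := by
  rw [← ha, ← hR, rootProb4_perm]

/-- With `Tᵢ` a rooted binary tree on leaf set `Yᵢ` whose
root `yᵢ` is attached below a node `ρ` by an edge with one-specific-change
probability `pᵢ ∈ [0,1/4]`, the following three identities hold:
`P_(α) - P_(β) = (1-4pᵢ)(P_α - P_β)`,
`P_(αβ) - P_(βγ) = (1-4pᵢ)(P_{αβ} - P_{βγ})` and
`P_(αβγ) - P_(βγδ) = (1-4pᵢ)(P_{αβγ} - P_{βγδ})`. -/
theorem PParen4_diff_identities (t : PhyloTree) (pi : ℝ) (h₀ : 0 ≤ pi)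
    (h₁ : pi ≤ 1/4) (hv : t.valid) :
    (PParen4 t pi {0} - PParen4 t pi {1}
        = (1 - 4*pi) * (rootProb4 t 0 {0} - rootProb4 t 0 {1})) ∧
    (PParen4 t pi {0, 1} - PParen4 t pi {1, 2}
        = (1 - 4*pi) * (rootProb4 t 0 {0, 1} - rootProb4 t 0 {1, 2})) ∧
    (PParen4 t pi {0, 1, 2} - PParen4 t pi {1, 2, 3}
        = (1 - 4*pi) * (rootProb4 t 0 {0, 1, 2} - rootProb4 t 0 {1, 2, 3})) := by
  have t0 : trans4 pi 0 0 = 1 - 3*pi := by simp [trans4]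
  have t1 : trans4 pi 0 1 = pi := by rw [trans4, if_neg (by decide)]
  have t2 : trans4 pi 0 2 = pi := by rw [trans4, if_neg (by decide)]
  have t3 : trans4 pi 0 3 = pi := by rw [trans4, if_neg (by decide)]
  -- singletons
  have h10 : rootProb4 t 1 {0} = rootProb4 t 0 {1} :=
    rootProb4_eq t (Equiv.swap 0 1) (by decide) (by decide)
  have h11 : rootProb4 t 1 {1} = rootProb4 t 0 {0} :=
    rootProb4_eq t (Equiv.swap 0 1) (by decide) (by decide)
  have h02 : rootProb4 t 0 {2} = rootProb4 t 0 {1} :=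
    (rootProb4_eq t (Equiv.swap 1 2) (by decide) (by decide)).symm
  have h03 : rootProb4 t 0 {3} = rootProb4 t 0 {1} :=
    (rootProb4_eq t (Equiv.swap 1 3) (by decide) (by decide)).symm
  have h20 : rootProb4 t 2 {0} = rootProb4 t 0 {1} := by
    rw [rootProb4_eq t (Equiv.swap 0 2) (a := 0) (R := {2}) (by decide) (by decide), h02]
  have h21 : rootProb4 t 2 {1} = rootProb4 t 0 {1} :=
    rootProb4_eq t (Equiv.swap 0 2) (by decide) (by decide)
  have h30 : rootProb4 t 3 {0} = rootProb4 t 0 {1} := by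
    rw [rootProb4_eq t (Equiv.swap 0 3) (a := 0) (R := {3}) (by decide) (by decide), h03]
  have h31 : rootProb4 t 3 {1} = rootProb4 t 0 {1} :=
    rootProb4_eq t (Equiv.swap 0 3) (by decide) (by decide)
  -- pairs
  have g1a : rootProb4 t 1 {0, 1} = rootProb4 t 0 {0, 1} :=
    rootProb4_eq t (Equiv.swap 0 1) (by decide) (by decide)
  have gaux : rootProb4 t 0 ({0, 2} : Finset (Fin 4)) = rootProb4 t 0 {0, 1} :=
    (rootProb4_eq t (Equiv.swap 1 2) (by decide) (by decide)).symm
  have g1b : rootProb4 t 1 {1, 2} = rootProb4 t 0 {0, 1} := by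
    rw [rootProb4_eq t (Equiv.swap 0 1) (a := 0) (R := {0, 2}) (by decide) (by decide), gaux]
  have g2a : rootProb4 t 2 {0, 1} = rootProb4 t 0 {1, 2} :=
    rootProb4_eq t (Equiv.swap 0 2) (by decide) (by decide)
  have g2b : rootProb4 t 2 {1, 2} = rootProb4 t 0 {0, 1} :=
    rootProb4_eq t (Equiv.swap 0 2) (by decide) (by decide)
  have gaux2 : rootProb4 t 0 ({1, 3} : Finset (Fin 4)) = rootProb4 t 0 {1, 2} :=
    (rootProb4_eq t (Equiv.swap 2 3) (by decide) (by decide)).symm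
  have g3a : rootProb4 t 3 {0, 1} = rootProb4 t 0 {1, 2} := by
    rw [rootProb4_eq t (Equiv.swap 0 3) (a := 0) (R := {1, 3}) (by decide) (by decide), gaux2]
  have g3b : rootProb4 t 3 {1, 2} = rootProb4 t 0 {1, 2} :=
    rootProb4_eq t (Equiv.swap 0 3) (by decide) (by decide)
  -- triples
  have k1a : rootProb4 t 1 {0, 1, 2} = rootProb4 t 0 {0, 1, 2} :=
    rootProb4_eq t (Equiv.swap 0 1) (by decide) (by decide)
  have kaux : rootProb4 t 0 ({0, 2, 3} : Finset (Fin 4)) = rootProb4 t 0 {0, 1, 2} :=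
    (rootProb4_eq t (Equiv.swap 1 3) (by decide) (by decide)).symm
  have k1b : rootProb4 t 1 {1, 2, 3} = rootProb4 t 0 {0, 1, 2} := by
    rw [rootProb4_eq t (Equiv.swap 0 1) (a := 0) (R := {0, 2, 3}) (by decide) (by decide), kaux]
  have k2a : rootProb4 t 2 {0, 1, 2} = rootProb4 t 0 {0, 1, 2} :=
    rootProb4_eq t (Equiv.swap 0 2) (by decide) (by decide)
  have kaux2 : rootProb4 t 0 ({0, 1, 3} : Finset (Fin 4)) = rootProb4 t 0 {0, 1, 2} :=
    (rootProb4_eq t (Equiv.swap 2 3) (by decide) (by decide)).symm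
  have k2b : rootProb4 t 2 {1, 2, 3} = rootProb4 t 0 {0, 1, 2} := by
    rw [rootProb4_eq t (Equiv.swap 0 2) (a := 0) (R := {0, 1, 3}) (by decide) (by decide), kaux2]
  have k3a : rootProb4 t 3 {0, 1, 2} = rootProb4 t 0 {1, 2, 3} :=
    rootProb4_eq t (Equiv.swap 0 3) (by decide) (by decide)
  have k3b : rootProb4 t 3 {1, 2, 3} = rootProb4 t 0 {0, 1, 2} :=
    rootProb4_eq t (Equiv.swap 0 3) (by decide) (by decide)
  refine ⟨?_, ?_, ?_⟩
  · simp only [PParen4, Fin.sum_univ_four, t0, t1, t2, t3,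
      h10, h11, h20, h21, h30, h31]
    ring
  · simp only [PParen4, Fin.sum_univ_four, t0, t1, t2, t3,
      g1a, g1b, g2a, g2b, g3a, g3b]
    ring
  · simp only [PParen4, Fin.sum_univ_four, t0, t1, t2, t3,
      k1a, k1b, k2a, k2b, k3a, k3b]
    ring
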